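/- arXiv:math/9808026 — 2 statements merged into one kernel-verified Lean document; each statement's English description precedes it below -/
import Mathlib

section
/- Let e ≥ 2 be an integer and ζ a primitive e-th root of unity in ℂ. Then for every integer j with 0 ≤ j ≤ e−1, the sum over k = 1, …, e−1 of ζ^{−jk}/(1−ζ^k) equals (e−1−2j)/2. -/
open Finset

lemma zeta_ne_zero (e : ℕ) (he : 2 ≤ e) (ζ : ℂ) (hζ : IsPrimitiveRoot ζ e) : ζ ≠ 0 := by
  intro h
  have := hζ.pow_eq_one
  rw [h] at this
  simp [zero_pow (by omega : e ≠ 0)] at this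

lemma pow_ne_one (e : ℕ) (ζ : ℂ) (hζ : IsPrimitiveRoot ζ e) (k : ℕ)
    (hk : k ∈ Icc 1 (e-1)) : ζ ^ k ≠ 1 := by
  simp only [mem_Icc] at hk
  intro h
  have hd := hζ.dvd_of_pow_eq_one k h
  have := Nat.le_of_dvd (by omega) hd
  omega

lemma base_sum (e : ℕ) (he : 2 ≤ e) (ζ : ℂ) (hζ : IsPrimitiveRoot ζ e) :
    ∑ k ∈ Icc 1 (e-1), 1/(1-ζ^k) = ((e:ℂ)-1)/2 := by
  have hz0 := zeta_ne_zero e he ζ hζ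
  have hrefl : ∑ k ∈ Icc 1 (e-1), 1/(1-ζ^(e-k)) = ∑ k ∈ Icc 1 (e-1), 1/(1-ζ^k) := by
    apply Finset.sum_nbij' (fun k => e - k) (fun k => e - k)
    · intro a ha; simp only [mem_Icc] at *; omega
    · intro a ha; simp only [mem_Icc] at *; omega
    · intro a ha; simp only [mem_Icc] at ha; omega
    · intro a ha; simp only [mem_Icc] at ha; omega
    · intro a ha
      rfl
  have hkey : ∀ k ∈ Icc 1 (e-1), 1/(1-ζ^k) + 1/(1-ζ^(e-k)) = 1 := by
    intro k hk
    have h1 : ζ ^ k ≠ 1 := pow_ne_one e ζ hζ k hk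
    simp only [mem_Icc] at hk
    have hek : ζ ^ (e - k) = (ζ ^ k)⁻¹ := by
      have hkk : ζ ^ (e - k) * ζ ^ k = 1 := by
        rw [← pow_add]
        have h : e - k + k = e := by omega
        rw [h, hζ.pow_eq_one]
      have hzk : ζ ^ k ≠ 0 := pow_ne_zero _ hz0
      field_simp
      linear_combination hkk
    rw [hek]
    have hzk : ζ ^ k ≠ 0 := pow_ne_zero _ hz0
    have h2 : (1:ℂ) - ζ ^ k ≠ 0 := by
      intro h; apply h1; linear_combination -h
    have hsub : ζ ^ k - 1 ≠ 0 := sub_ne_zero.mpr h1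
    have hA : (1 : ℂ) - (ζ^k)⁻¹ = (ζ^k - 1) / ζ^k := by
      field_simp
    rw [hA, one_div_div]
    rw [div_add_div _ _ h2 hsub, div_eq_one_iff_eq (mul_ne_zero h2 hsub)]
    ring
  have h2S : (∑ k ∈ Icc 1 (e-1), 1/(1-ζ^k)) + (∑ k ∈ Icc 1 (e-1), 1/(1-ζ^k)) = (e:ℂ) - 1 := by
    nth_rewrite 2 [← hrefl]
    rw [← Finset.sum_add_distrib]
    rw [Finset.sum_congr rfl hkey]
    rw [Finset.sum_const, Nat.card_Icc, nsmul_eq_mul, mul_one]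
    have h : e - 1 + 1 - 1 = e - 1 := by omega
    rw [h, Nat.cast_sub (by omega : 1 ≤ e), Nat.cast_one]
  field_simp
  linear_combination h2S

lemma geom_aux (e : ℕ) (he : 2 ≤ e) (ζ : ℂ) (hζ : IsPrimitiveRoot ζ e) (m : ℕ)
    (hm : m ∈ Icc 1 (e-1)) :
    ∑ k ∈ Icc 1 (e-1), ((ζ ^ m)⁻¹) ^ k = -1 := by
  have hz0 := zeta_ne_zero e he ζ hζ
  set w : ℂ := (ζ ^ m)⁻¹ with hw
  have hw1 : w ≠ 1 := by
    intro h
    apply pow_ne_one e ζ hζ m hm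
    rw [hw] at h
    field_simp at h
    exact h.symm
  have hwe : w ^ e = 1 := by
    rw [hw, inv_pow, ← pow_mul, mul_comm m e, pow_mul, hζ.pow_eq_one, one_pow, inv_one]
  have hfull : ∑ k ∈ range e, w ^ k = 0 := by
    rw [geom_sum_eq hw1 e, hwe]
    simp
  have hIcc : Icc 1 (e-1) = Ico 1 e := by
    rw [← Finset.Ico_add_one_right_eq_Icc]
    congr 1
    omega
  rw [hIcc]
  rw [Finset.range_eq_Ico, Finset.sum_eq_sum_Ico_succ_bot (by omega : 0 < e)] at hfull
  simp only [pow_zero] at hfull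
  linear_combination hfull

/-- For `e ≥ 2` and `ζ` a primitive `e`-th root of unity in `ℂ`, and `0 ≤ j ≤ e-1`,
`∑_{k=1}^{e-1} ζ^{-jk}/(1-ζ^k) = (e-1-2j)/2`. -/
theorem stmt0 (e : ℕ) (he : 2 ≤ e) (ζ : ℂ) (hζ : IsPrimitiveRoot ζ e)
    (j : ℕ) (hj : j ≤ e - 1) :
    ∑ k ∈ Finset.Icc 1 (e - 1), ζ ^ (-(j * k : ℤ)) / (1 - ζ ^ k) =
      ((e : ℂ) - 1 - 2 * j) / 2 := by
  have hz0 := zeta_ne_zero e he ζ hζ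
  induction j with
  | zero =>
    simp only [Nat.cast_zero, zero_mul, neg_zero, zpow_zero]
    rw [Finset.sum_congr rfl (fun k _ => by rw [div_eq_mul_inv, one_mul, ← one_div])]
    rw [base_sum e he ζ hζ]
    ring
  | succ j ih =>
    have hj' : j ≤ e - 1 := by omega
    have IH := ih hj'
    have step : ∀ k ∈ Icc 1 (e-1),
        ζ ^ (-(↑(j+1) * k : ℤ)) / (1 - ζ ^ k)
          = ζ ^ (-(↑j * k : ℤ)) / (1 - ζ ^ k) + ((ζ ^ (j+1))⁻¹) ^ k := by
      intro k hk
      have h1 : ζ ^ k ≠ 1 := pow_ne_one e ζ hζ k hk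
      have h2 : (1:ℂ) - ζ ^ k ≠ 0 := by intro h; apply h1; linear_combination -h
      have hzk : ζ ^ k ≠ 0 := pow_ne_zero _ hz0
      have e1 : ζ ^ (-(↑(j+1) * k : ℤ)) = (ζ ^ ((j+1)*k))⁻¹ := by
        rw [← zpow_natCast ζ ((j+1)*k), ← zpow_neg]
        norm_cast
      have e2 : ζ ^ (-(↑j * k : ℤ)) = (ζ ^ (j*k))⁻¹ := by
        rw [← zpow_natCast ζ (j*k), ← zpow_neg]
        norm_cast
      rw [e1, e2, inv_pow, ← pow_mul]
      have hab : ζ ^ ((j+1)*k) = ζ ^ (j*k) * ζ ^ k := by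
        rw [← pow_add]
        congr 1
        ring
      rw [hab]
      have hjk : ζ ^ (j*k) ≠ 0 := pow_ne_zero _ hz0
      field_simp
      ring
    rw [Finset.sum_congr rfl step, Finset.sum_add_distrib, IH,
      geom_aux e he ζ hζ (j+1) (by simp only [mem_Icc]; omega)]
    push_cast
    ring
end

section
/- Let f be a holomorphic function on ℂ^m, bounded on bounded sets, which is a root of a monic polynomial with coefficients in the polynomial ring ℂ[z_1,…,z_m]. Then f ∈ ℂ[z_1,…,z_m]; that is, the polynomial ring ℂ[z_1,…,z_m] is integrally closed in the ring of entire functions on ℂ^m. -/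
open Polynomial in
/-- One-variable: an entire function of polynomial growth of exponent `N` is a
polynomial of degree at most `N`. -/
lemma oneVarPolyGrowth : ∀ (N : ℕ) (g : ℂ → ℂ), Differentiable ℂ g → ∀ C : ℝ,
    (∀ z, ‖g z‖ ≤ C * (1 + ‖z‖) ^ N) →
    ∃ p : Polynomial ℂ, p.natDegree ≤ N ∧ ∀ z, p.eval z = g z := by
  intro N
  induction N with
  | zero =>
    intro g hg C hb
    have hbd : Bornology.IsBounded (Set.range g) := by
      rw [isBounded_iff_forall_norm_le]
      exact ⟨C, by rintro x ⟨z, rfl⟩; simpa using hb z⟩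
    obtain ⟨c, hc⟩ := hg.exists_const_forall_eq_of_bounded hbd
    exact ⟨Polynomial.C c, by simp, fun z => by simp [hc z]⟩
  | succ N ih =>
    intro g hg C hb
    have hC0 : 0 ≤ C := le_trans (norm_nonneg (g 0)) (by simpa using hb 0)
    set h : ℂ → ℂ := dslope g 0 with hh
    have hdh : Differentiable ℂ h := by
      rw [← differentiableOn_univ]
      exact (Complex.differentiableOn_dslope Filter.univ_mem).mpr hg.differentiableOn
    obtain ⟨M, hM⟩ := (isCompact_closedBall (0:ℂ) 1).exists_bound_of_continuousOn
      hdh.continuous.continuousOn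
    have hM0 : 0 ≤ M := le_trans (norm_nonneg (h 0)) (hM 0 (by simp))
    have hbound : ∀ z, ‖h z‖ ≤ (max M (3 * C)) * (1 + ‖z‖) ^ N := by
      intro z
      have h1 : (1:ℝ) ≤ (1 + ‖z‖) ^ N := one_le_pow₀ (by linarith [norm_nonneg z])
      rcases le_or_gt ‖z‖ 1 with hz | hz
      · have : ‖h z‖ ≤ M := hM z (by simpa using hz)
        calc ‖h z‖ ≤ M := this
          _ ≤ max M (3 * C) := le_max_left _ _
          _ ≤ max M (3 * C) * (1 + ‖z‖) ^ N :=
            le_mul_of_one_le_right (le_trans hM0 (le_max_left _ _)) h1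
      · have hz0 : z ≠ 0 := by
          intro h0; rw [h0] at hz; norm_num at hz
        have hzpos : (0:ℝ) < ‖z‖ := by linarith
        have hzd : h z = (g z - g 0) / z := by
          rw [hh, dslope_of_ne g hz0, slope_def_field]
          simp
        have hgz : ‖g z‖ ≤ C * (1 + ‖z‖) ^ N * (1 + ‖z‖) := by
          have h := hb z; rw [pow_succ] at h
          calc ‖g z‖ ≤ C * ((1 + ‖z‖) ^ N * (1 + ‖z‖)) := h
            _ = C * (1 + ‖z‖) ^ N * (1 + ‖z‖) := by ring
        have hg0 : ‖g 0‖ ≤ C := by simpa using hb 0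
        have hnum : ‖g z - g 0‖ ≤ C * (1 + ‖z‖) ^ N * (1 + ‖z‖) + C :=
          le_trans (norm_sub_le _ _) (add_le_add hgz hg0)
        have heq : ‖h z‖ * ‖z‖ = ‖g z - g 0‖ := by
          rw [hzd, norm_div]
          exact div_mul_cancel₀ _ (ne_of_gt hzpos)
        have key : ‖h z‖ ≤ 3 * C * (1 + ‖z‖) ^ N := by
          have hb1 : (1:ℝ) ≤ (1 + ‖z‖) ^ N := h1
          nlinarith [norm_nonneg (h z), mul_nonneg hC0 (le_trans zero_le_one hb1)]
        calc ‖h z‖ ≤ 3 * C * (1 + ‖z‖) ^ N := key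
          _ ≤ max M (3 * C) * (1 + ‖z‖) ^ N := by
            apply mul_le_mul_of_nonneg_right (le_max_right _ _) (by positivity)
    obtain ⟨q, hqdeg, hq⟩ := ih h hdh _ hbound
    refine ⟨Polynomial.C (g 0) + Polynomial.X * q, ?_, ?_⟩
    · refine le_trans (Polynomial.natDegree_add_le _ _) ?_
      refine max_le (by simp) ?_
      refine le_trans Polynomial.natDegree_mul_le ?_
      rw [Polynomial.natDegree_X]
      omega
    · intro z
      rcases eq_or_ne z 0 with rfl | hz0
      · simp
      · have : h z = (g z - g 0) / z := by
          rw [hh, dslope_of_ne g hz0, slope_def_field]; simp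
        simp only [Polynomial.eval_add, Polynomial.eval_C, Polynomial.eval_mul,
          Polynomial.eval_X, hq z, this]
        field_simp
        ring

/-- Multivariable: an entire function on `ℂ^m` of polynomial growth is a polynomial. -/
lemma mvPolyGrowth : ∀ (m : ℕ) (f : (Fin m → ℂ) → ℂ), Differentiable ℂ f →
    ∀ (C : ℝ) (N : ℕ), (∀ z, ‖f z‖ ≤ C * (1 + ‖z‖) ^ N) →
    ∃ P : MvPolynomial (Fin m) ℂ, ∀ z, MvPolynomial.eval z P = f z := by
  intro m
  induction m with
  | zero =>
    intro f hf C N hb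
    refine ⟨MvPolynomial.C (f default), fun z => ?_⟩
    rw [Subsingleton.elim z default]
    simp
  | succ m ih =>
    intro f hf C N hb
    have hC0 : 0 ≤ C := by
      have h := le_trans (norm_nonneg (f 0)) (hb 0)
      have hp : (0:ℝ) < (1 + ‖(0 : Fin (m+1) → ℂ)‖) ^ N := by positivity
      nlinarith
    -- differentiability of the insertion maps
    have hcons1 : ∀ w : Fin m → ℂ, Differentiable ℂ
        (fun t : ℂ => (Fin.cons t w : Fin (m+1) → ℂ)) := by
      intro w
      rw [differentiable_pi]
      intro i
      refine Fin.cases ?_ (fun j => ?_) i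
      · simpa using differentiable_id
      · simpa using differentiable_const (w j)
    have hcons2 : ∀ t : ℂ, Differentiable ℂ
        (fun w : Fin m → ℂ => (Fin.cons t w : Fin (m+1) → ℂ)) := by
      intro t
      rw [differentiable_pi]
      intro i
      refine Fin.cases ?_ (fun j => ?_) i
      · simpa using differentiable_const t
      · simp only [Fin.cons_succ]
        exact (ContinuousLinearMap.proj j : (Fin m → ℂ) →L[ℂ] ℂ).differentiable
    -- norm bound for cons
    have hconsnorm : ∀ (t : ℂ) (w : Fin m → ℂ),
        ‖(Fin.cons t w : Fin (m+1) → ℂ)‖ ≤ ‖t‖ + ‖w‖ := by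
      intro t w
      rw [pi_norm_le_iff_of_nonneg (by positivity)]
      intro i
      refine Fin.cases ?_ (fun j => ?_) i
      · simp [le_add_of_nonneg_right (norm_nonneg w)]
      · simpa using le_trans (norm_le_pi_norm w j) (le_add_of_nonneg_left (norm_nonneg t))
    have hgrow : ∀ (t : ℂ) (w : Fin m → ℂ),
        ‖f (Fin.cons t w)‖ ≤ (C * (1 + ‖w‖) ^ N) * (1 + ‖t‖) ^ N := by
      intro t w
      have h1 : (1 : ℝ) + ‖(Fin.cons t w : Fin (m+1) → ℂ)‖ ≤ (1 + ‖t‖) * (1 + ‖w‖) := by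
        have := hconsnorm t w
        nlinarith [norm_nonneg t, norm_nonneg w, mul_nonneg (norm_nonneg t) (norm_nonneg w)]
      calc ‖f (Fin.cons t w)‖ ≤ C * (1 + ‖(Fin.cons t w : Fin (m+1) → ℂ)‖) ^ N := hb _
        _ ≤ C * ((1 + ‖t‖) * (1 + ‖w‖)) ^ N := by
            apply mul_le_mul_of_nonneg_left _ hC0
            exact pow_le_pow_left₀ (by positivity) h1 N
        _ = (C * (1 + ‖w‖) ^ N) * (1 + ‖t‖) ^ N := by rw [mul_pow]; ring
    -- each slice is a polynomial of degree ≤ N in the first variable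
    have hslice : ∀ w : Fin m → ℂ, ∃ p : Polynomial ℂ, p.natDegree ≤ N ∧
        ∀ t, p.eval t = f (Fin.cons t w) := by
      intro w
      exact oneVarPolyGrowth N (fun t => f (Fin.cons t w))
        (hf.comp (hcons1 w)) (C * (1 + ‖w‖) ^ N) (fun t => hgrow t w)
    -- the functions w ↦ f(k, w) are polynomials by induction
    have key : ∀ k : ℕ, ∃ P : MvPolynomial (Fin m) ℂ,
        ∀ w, MvPolynomial.eval w P = f (Fin.cons (k : ℂ) w) := by
      intro k
      exact ih (fun w => f (Fin.cons (k : ℂ) w)) (hf.comp (hcons2 (k : ℂ)))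
        (C * (1 + ‖(k : ℂ)‖) ^ N) N
        (fun w => by
          calc ‖f (Fin.cons (k : ℂ) w)‖ ≤ (C * (1 + ‖w‖) ^ N) * (1 + ‖(k : ℂ)‖) ^ N :=
              hgrow _ w
            _ = C * (1 + ‖(k : ℂ)‖) ^ N * (1 + ‖w‖) ^ N := by ring)
    choose P hP using key
    -- Lagrange interpolation setup
    set s : Finset ℕ := Finset.range (N + 1) with hs
    have hinj : Set.InjOn (fun k : ℕ => (k : ℂ)) s :=
      fun a _ b _ hab => Nat.cast_injective hab
    -- f(cons t w) = ∑_{k ∈ s} f(cons k w) * (basis s v k).eval t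
    have hinterp : ∀ (t : ℂ) (w : Fin m → ℂ),
        f (Fin.cons t w) = ∑ k ∈ s, f (Fin.cons (k : ℂ) w) *
          (Lagrange.basis s (fun k : ℕ => (k : ℂ)) k).eval t := by
      intro t w
      obtain ⟨p, hpdeg, hp⟩ := hslice w
      have hdeg : p.degree < (s.card : ℕ) := by
        have h1 : p.degree ≤ (p.natDegree : WithBot ℕ) := Polynomial.degree_le_natDegree
        have h2 : s.card = N + 1 := by simp [hs]
        rw [h2]
        refine lt_of_le_of_lt h1 ?_
        exact_mod_cast Nat.lt_succ_of_le hpdeg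
      have heq := Lagrange.eq_interpolate_of_eval_eq _ hinj hdeg
        (fun k _ => hp (k : ℂ))
      calc f (Fin.cons t w) = p.eval t := (hp t).symm
        _ = (Lagrange.interpolate s (fun k : ℕ => (k : ℂ))
              (fun k => f (Fin.cons (k : ℂ) w))).eval t := by rw [← heq]
        _ = ∑ k ∈ s, f (Fin.cons (k : ℂ) w) *
              (Lagrange.basis s (fun k : ℕ => (k : ℂ)) k).eval t := by
            rw [Lagrange.interpolate_apply]
            simp [Polynomial.eval_finset_sum]
    -- build the multivariable polynomial
    refine ⟨∑ k ∈ s, (MvPolynomial.rename Fin.succ (P k)) *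
      (Polynomial.eval₂ MvPolynomial.C (MvPolynomial.X 0)
        (Lagrange.basis s (fun k : ℕ => (k : ℂ)) k)), fun z => ?_⟩
    have hz : z = Fin.cons (z 0) (Fin.tail z) := (Fin.cons_self_tail z).symm
    rw [map_sum]
    have heval : ∀ k ∈ s, MvPolynomial.eval z ((MvPolynomial.rename Fin.succ (P k)) *
        (Polynomial.eval₂ MvPolynomial.C (MvPolynomial.X 0)
          (Lagrange.basis s (fun k : ℕ => (k : ℂ)) k))) =
        f (Fin.cons (k : ℂ) (Fin.tail z)) *
          (Lagrange.basis s (fun k : ℕ => (k : ℂ)) k).eval (z 0) := by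
      intro k _
      rw [map_mul]
      congr 1
      · rw [MvPolynomial.eval_rename]
        exact hP k (Fin.tail z)
      · rw [Polynomial.hom_eval₂]
        have h1 : (MvPolynomial.eval z).comp (MvPolynomial.C) = RingHom.id ℂ := by
          ext a; simp
        rw [h1]
        simp
    rw [Finset.sum_congr rfl heval]
    conv_rhs => rw [hz]
    exact (hinterp (z 0) (Fin.tail z)).symm

/-- Every multivariable polynomial has polynomial growth. -/
lemma mvPoly_growth_bound {m : ℕ} (P : MvPolynomial (Fin m) ℂ) :
    ∃ (C : ℝ) (N : ℕ), 0 ≤ C ∧ ∀ z : Fin m → ℂ, ‖MvPolynomial.eval z P‖ ≤ C * (1 + ‖z‖) ^ N := by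
  induction P using MvPolynomial.induction_on with
  | C a => exact ⟨‖a‖, 0, norm_nonneg a, fun z => by simp⟩
  | add p q hp hq =>
    obtain ⟨C1, N1, hC1, h1⟩ := hp
    obtain ⟨C2, N2, hC2, h2⟩ := hq
    refine ⟨C1 + C2, max N1 N2, by positivity, fun z => ?_⟩
    have hb : (1:ℝ) ≤ 1 + ‖z‖ := by linarith [norm_nonneg z]
    calc ‖MvPolynomial.eval z (p + q)‖ ≤ ‖MvPolynomial.eval z p‖ + ‖MvPolynomial.eval z q‖ := by
          rw [map_add]; exact norm_add_le _ _
      _ ≤ C1 * (1 + ‖z‖) ^ N1 + C2 * (1 + ‖z‖) ^ N2 := add_le_add (h1 z) (h2 z)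
      _ ≤ C1 * (1 + ‖z‖) ^ max N1 N2 + C2 * (1 + ‖z‖) ^ max N1 N2 :=
          add_le_add
            (mul_le_mul_of_nonneg_left (pow_le_pow_right₀ hb (le_max_left _ _)) hC1)
            (mul_le_mul_of_nonneg_left (pow_le_pow_right₀ hb (le_max_right _ _)) hC2)
      _ = (C1 + C2) * (1 + ‖z‖) ^ max N1 N2 := by ring
  | mul_X p i hp =>
    obtain ⟨C1, N1, hC1, h1⟩ := hp
    refine ⟨C1, N1 + 1, hC1, fun z => ?_⟩
    have hzi : ‖z i‖ ≤ 1 + ‖z‖ :=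
      le_trans (norm_le_pi_norm z i) (by linarith [norm_nonneg z])
    calc ‖MvPolynomial.eval z (p * MvPolynomial.X i)‖
        = ‖MvPolynomial.eval z p‖ * ‖z i‖ := by rw [map_mul]; simp [norm_mul]
      _ ≤ (C1 * (1 + ‖z‖) ^ N1) * (1 + ‖z‖) := by
          exact mul_le_mul (h1 z) hzi (norm_nonneg _) (mul_nonneg hC1 (by positivity))
      _ = C1 * (1 + ‖z‖) ^ (N1 + 1) := by rw [pow_succ]; ring

/-- The polynomial ring `ℂ[z_1,…,z_m]` is integrally closed in the ring of entire
functions on `ℂ^m`: if an entire function `f`, bounded on bounded sets, satisfies a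
monic polynomial equation `f^d + c_{d-1} f^{d-1} + ⋯ + c_0 = 0` with coefficients
`c_i ∈ ℂ[z_1,…,z_m]`, then `f` is a polynomial. -/
theorem stmt19 (m : ℕ) (f : (Fin m → ℂ) → ℂ) (hf : Differentiable ℂ f)
    (hbdd : ∀ B : Set (Fin m → ℂ), Bornology.IsBounded B → Bornology.IsBounded (f '' B))
    (d : ℕ) (hd : 0 < d) (c : Fin d → MvPolynomial (Fin m) ℂ)
    (hmonic : ∀ z : Fin m → ℂ,
      f z ^ d + ∑ i : Fin d, MvPolynomial.eval z (c i) * f z ^ (i : ℕ) = 0) :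
    ∃ P : MvPolynomial (Fin m) ℂ, ∀ z : Fin m → ℂ, MvPolynomial.eval z P = f z := by
  -- Step 1: pointwise root bound |f z| ≤ 1 + ∑ |c_i(z)|
  have hroot : ∀ z, ‖f z‖ ≤ 1 + ∑ i : Fin d, ‖MvPolynomial.eval z (c i)‖ := by
    intro z
    set S := ∑ i : Fin d, ‖MvPolynomial.eval z (c i)‖ with hS
    have hS0 : 0 ≤ S := Finset.sum_nonneg fun i _ => norm_nonneg _
    by_contra hcon
    push_neg at hcon
    have hf1 : 1 ≤ ‖f z‖ := by linarith
    have hfpos : 0 < ‖f z‖ := by linarith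
    have heq : f z ^ d = -∑ i : Fin d, MvPolynomial.eval z (c i) * f z ^ (i : ℕ) := by
      linear_combination hmonic z
    have hnorm : ‖f z‖ ^ d ≤ ∑ i : Fin d, ‖MvPolynomial.eval z (c i)‖ * ‖f z‖ ^ (i : ℕ) := by
      calc ‖f z‖ ^ d = ‖f z ^ d‖ := (norm_pow _ _).symm
        _ = ‖∑ i : Fin d, MvPolynomial.eval z (c i) * f z ^ (i : ℕ)‖ := by rw [heq, norm_neg]
        _ ≤ ∑ i : Fin d, ‖MvPolynomial.eval z (c i) * f z ^ (i : ℕ)‖ := norm_sum_le _ _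
        _ = ∑ i : Fin d, ‖MvPolynomial.eval z (c i)‖ * ‖f z‖ ^ (i : ℕ) := by
            simp [norm_mul, norm_pow]
    have hstep : ‖f z‖ ^ d ≤ S * ‖f z‖ ^ (d - 1) := by
      calc ‖f z‖ ^ d ≤ ∑ i : Fin d, ‖MvPolynomial.eval z (c i)‖ * ‖f z‖ ^ (i : ℕ) := hnorm
        _ ≤ ∑ i : Fin d, ‖MvPolynomial.eval z (c i)‖ * ‖f z‖ ^ (d - 1) := by
            refine Finset.sum_le_sum fun i _ => ?_
            exact mul_le_mul_of_nonneg_left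
              (pow_le_pow_right₀ hf1 (by omega)) (norm_nonneg _)
        _ = S * ‖f z‖ ^ (d - 1) := by rw [hS, Finset.sum_mul]
    have hpow : ‖f z‖ ^ d = ‖f z‖ * ‖f z‖ ^ (d - 1) := by
      conv_lhs => rw [show d = 1 + (d - 1) by omega]
      rw [pow_add, pow_one]
    have hposd : (0:ℝ) < ‖f z‖ ^ (d - 1) := pow_pos hfpos _
    have hfS : ‖f z‖ ≤ S := by
      rw [hpow] at hstep
      exact le_of_mul_le_mul_right (by linarith) hposd
    linarith
  -- Step 2: polynomial growth of f
  choose Cf Nf hCf hbf using fun i : Fin d => mvPoly_growth_bound (c i)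
  set Nmax := Finset.univ.sup Nf with hNmax
  set Ctot : ℝ := 1 + ∑ i : Fin d, Cf i with hCtot
  have hgrow : ∀ z, ‖f z‖ ≤ Ctot * (1 + ‖z‖) ^ Nmax := by
    intro z
    have hb1 : (1:ℝ) ≤ 1 + ‖z‖ := by linarith [norm_nonneg z]
    have hbN : (1:ℝ) ≤ (1 + ‖z‖) ^ Nmax := one_le_pow₀ hb1
    calc ‖f z‖ ≤ 1 + ∑ i : Fin d, ‖MvPolynomial.eval z (c i)‖ := hroot z
      _ ≤ 1 + ∑ i : Fin d, Cf i * (1 + ‖z‖) ^ Nmax := by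
          have hsum : ∑ i : Fin d, ‖MvPolynomial.eval z (c i)‖ ≤
              ∑ i : Fin d, Cf i * (1 + ‖z‖) ^ Nmax := by
            refine Finset.sum_le_sum fun i _ => ?_
            calc ‖MvPolynomial.eval z (c i)‖ ≤ Cf i * (1 + ‖z‖) ^ Nf i := hbf i z
              _ ≤ Cf i * (1 + ‖z‖) ^ Nmax :=
                  mul_le_mul_of_nonneg_left
                    (pow_le_pow_right₀ hb1 (Finset.le_sup (Finset.mem_univ i))) (hCf i)
          linarith
      _ ≤ Ctot * (1 + ‖z‖) ^ Nmax := by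
          rw [hCtot, add_mul, one_mul, Finset.sum_mul]
          linarith
  exact mvPolyGrowth m f hf Ctot Nmax hgrow
end
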